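/- Let X be a proper hyperbolic geodesic metric space with Gromov boundary ∂X. Then the product ∂X × X admits a distance function d̃ which is invariant under the diagonal action of the isometry group Iso(X) and which induces the product topology on ∂X × X. -/

import Mathlib

open Metric Filter Set MeasureTheory Topology Pointwise
open scoped ENNReal NNReal

noncomputable section

namespace PaperHyp

variable {X : Type*} [MetricSpace X]

/-- `f` parametrizes a geodesic segment from `x` to `y` on the interval `[0, dist x y]`. -/
def IsGeodesicSegmentBetween (f : ℝ → X) (x y : X) : Prop :=
  f 0 = x ∧ f (dist x y) = y ∧
    ∀ s ∈ Set.Icc (0 : ℝ) (dist x y), ∀ t ∈ Set.Icc (0 : ℝ) (dist x y),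
      dist (f s) (f t) = |s - t|

/-- `X` is a geodesic metric space: any two points are joined by a geodesic segment. -/
def GeodesicSpace (X : Type*) [MetricSpace X] : Prop :=
  ∀ x y : X, ∃ f : ℝ → X, IsGeodesicSegmentBetween f x y

/-- The set `s` is the image of a geodesic segment from `x` to `y`. -/
def IsGeodesicSegmentSet (s : Set X) (x y : X) : Prop :=
  ∃ f : ℝ → X, IsGeodesicSegmentBetween f x y ∧ s = f '' Set.Icc 0 (dist x y)

/-- The `δ`-thin triangle condition: each side of a geodesic triangle is contained in the
`δ`-neighborhood of the union of the other two sides. -/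
def DeltaThinTriangles (X : Type*) [MetricSpace X] (δ : ℝ) : Prop :=
  ∀ x y z : X, ∀ a b c : Set X,
    IsGeodesicSegmentSet a x y → IsGeodesicSegmentSet b y z → IsGeodesicSegmentSet c x z →
      ∀ p ∈ c, ∃ q ∈ a ∪ b, dist p q ≤ δ

/-- Gromov hyperbolicity: the `δ`-thin triangle condition for some `δ > 0`. -/
def GromovHyperbolic (X : Type*) [MetricSpace X] : Prop :=
  ∃ δ > 0, DeltaThinTriangles X δ

/-- The Gromov product `(y,z)_x`. -/
def gromovProd (x y z : X) : ℝ := (dist y x + dist z x - dist y z) / 2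

/-- A sequence converging to infinity in the sense of Gromov. -/
def IsGromovSeq (x : X) (u : ℕ → X) : Prop :=
  Tendsto (fun p : ℕ × ℕ => gromovProd x (u p.1) (u p.2)) atTop atTop

/-- The space of Gromov sequences. -/
def GromovSeq (X : Type*) [MetricSpace X] : Type _ :=
  {u : ℕ → X // ∀ x : X, IsGromovSeq x u}

/-- Two Gromov sequences are equivalent if their mutual Gromov products tend to infinity. -/
def gromovRel (u v : GromovSeq X) : Prop :=
  ∀ x : X, Tendsto (fun p : ℕ × ℕ => gromovProd x (u.1 p.1) (v.1 p.2)) atTop atTop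

/-- The Gromov boundary of `X`. -/
def GromovBoundary (X : Type*) [MetricSpace X] : Type _ :=
  Quot (gromovRel (X := X))

/-- A sequence in `X` converges to the boundary point `ξ`. -/
def SeqConvToBoundary (u : ℕ → X) (ξ : GromovBoundary X) : Prop :=
  ∃ h : ∀ x : X, IsGromovSeq x u, Quot.mk gromovRel (⟨u, h⟩ : GromovSeq X) = ξ

/-- The isometry group of `X`. -/
abbrev Iso (X : Type*) [MetricSpace X] := X ≃ᵢ X

/-- The compact-open topology on the isometry group. -/
instance : TopologicalSpace (Iso X) :=
  TopologicalSpace.induced (fun g : Iso X => (ContinuousMap.mk g g.continuous : C(X, X)))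
    ContinuousMap.compactOpen

lemma gromovProd_isometry (g : Iso X) (x y z : X) :
    gromovProd x (g y) (g z) = gromovProd (g.symm x) y z := by
  have h1 : dist (g y) x = dist y (g.symm x) := by
    conv_lhs => rw [← g.apply_symm_apply x]
    rw [g.dist_eq]
  have h2 : dist (g z) x = dist z (g.symm x) := by
    conv_lhs => rw [← g.apply_symm_apply x]
    rw [g.dist_eq]
  unfold gromovProd
  rw [h1, h2, g.dist_eq]

lemma isGromovSeq_comp (g : Iso X) {u : ℕ → X} (h : ∀ x : X, IsGromovSeq x u) (x : X) :
    IsGromovSeq x (fun n => g (u n)) := by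
  have hx := h (g.symm x)
  unfold IsGromovSeq at hx ⊢
  simp only [gromovProd_isometry]
  exact hx

/-- An isometry maps Gromov sequences to Gromov sequences. -/
def GromovSeq.map (g : Iso X) (u : GromovSeq X) : GromovSeq X :=
  ⟨fun n => g (u.1 n), fun x => isGromovSeq_comp g u.2 x⟩

lemma gromovRel_map (g : Iso X) {u v : GromovSeq X} (h : gromovRel u v) :
    gromovRel (u.map g) (v.map g) := by
  intro x
  have hx := h (g.symm x)
  show Tendsto (fun p : ℕ × ℕ => gromovProd x (g (u.1 p.1)) (g (v.1 p.2))) atTop atTop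
  simp only [gromovProd_isometry]
  exact hx

/-- The induced action of an isometry on the Gromov boundary. -/
def boundaryMap (g : Iso X) : GromovBoundary X → GromovBoundary X :=
  Quot.map (GromovSeq.map g) (fun _ _ h => gromovRel_map g h)

/-- The Gromov product of two boundary points, based at `x`. -/
def gromovProdB (x : X) (ξ η : GromovBoundary X) : ℝ≥0∞ :=
  ⨆ (u : GromovSeq X) (_ : Quot.mk gromovRel u = ξ) (v : GromovSeq X) (_ : Quot.mk gromovRel v = η),
    Filter.liminf (fun p : ℕ × ℕ => ENNReal.ofReal (gromovProd x (u.1 p.1) (v.1 p.2))) atTop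

/-- The (visual) topology on the Gromov boundary. -/
instance : TopologicalSpace (GromovBoundary X) where
  IsOpen U := ∀ ξ ∈ U, ∀ x : X, ∃ R : ℝ≥0∞, R ≠ ⊤ ∧ {η | R < gromovProdB x ξ η} ⊆ U
  isOpen_univ := fun _ _ _ => ⟨0, ENNReal.zero_ne_top, Set.subset_univ _⟩
  isOpen_inter := by
    intro U V hU hV ξ hξ x
    obtain ⟨R₁, hR₁, hs₁⟩ := hU ξ hξ.1 x
    obtain ⟨R₂, hR₂, hs₂⟩ := hV ξ hξ.2 x
    refine ⟨max R₁ R₂, (max_lt hR₁.lt_top hR₂.lt_top).ne, fun η hη => ?_⟩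
    rw [Set.mem_setOf_eq, max_lt_iff] at hη
    exact ⟨hs₁ hη.1, hs₂ hη.2⟩
  isOpen_sUnion := by
    intro S hS ξ hξ x
    obtain ⟨U, hUS, hξU⟩ := hξ
    obtain ⟨R, hR, hsub⟩ := hS U hUS ξ hξU x
    exact ⟨R, hR, hsub.trans (Set.subset_sUnion_of_mem hUS)⟩

/-- The limit set of a subgroup of the isometry group: all accumulation points in the
Gromov boundary of an orbit in `X`. -/
def limitSet (G : Subgroup (Iso X)) : Set (GromovBoundary X) :=
  {ξ | ∃ (x : X) (g : ℕ → G), SeqConvToBoundary (fun n => (g n : Iso X) x) ξ}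

/-- A subgroup of the isometry group is elementary if its limit set contains at most two
points. -/
def IsElementary (G : Subgroup (Iso X)) : Prop :=
  ∃ a b : GromovBoundary X, limitSet G ⊆ {a, b}

/-- `g` is a hyperbolic isometry with attracting fixed point `a` and repelling fixed
point `b`. -/
def IsHyperbolicWithFP (g : Iso X) (a b : GromovBoundary X) : Prop :=
  a ≠ b ∧ boundaryMap g a = a ∧ boundaryMap g b = b ∧
    (∀ x : X, SeqConvToBoundary (fun n => (g ^ n) x) a) ∧
    (∀ x : X, SeqConvToBoundary (fun n => (g⁻¹ ^ n) x) b)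

/-- `g` is a hyperbolic isometry. -/
def IsHyperbolicIsom (g : Iso X) : Prop :=
  ∃ a b : GromovBoundary X, IsHyperbolicWithFP g a b

/-- `(x,y,z)` is a triple of pairwise distinct points of the limit set of `G`. -/
def InTripleSpace (G : Subgroup (Iso X)) (x y z : GromovBoundary X) : Prop :=
  x ∈ limitSet G ∧ y ∈ limitSet G ∧ z ∈ limitSet G ∧ x ≠ y ∧ x ≠ z ∧ y ≠ z

/-- The space of triples of pairwise distinct points in the limit set of `G`. -/
def tripleSet (G : Subgroup (Iso X)) :
    Set (GromovBoundary X × GromovBoundary X × GromovBoundary X) :=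
  {t | InTripleSpace G t.1 t.2.1 t.2.2}

/-- `G` acts transitively on the complement of the diagonal in `Λ × Λ`. -/
def ActsTransitivelyOffDiagonal (G : Subgroup (Iso X)) : Prop :=
  ∀ p q : GromovBoundary X × GromovBoundary X,
    p.1 ∈ limitSet G → p.2 ∈ limitSet G → p.1 ≠ p.2 →
    q.1 ∈ limitSet G → q.2 ∈ limitSet G → q.1 ≠ q.2 →
    ∃ h : G, (boundaryMap (h : Iso X) p.1, boundaryMap (h : Iso X) p.2) = q

/-- `γ` is a geodesic ray from `x` to the boundary point `a`. -/
def IsGeodesicRayTo (γ : ℝ → X) (x : X) (a : GromovBoundary X) : Prop :=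
  γ 0 = x ∧ (∀ s ∈ Set.Ici (0 : ℝ), ∀ t ∈ Set.Ici (0 : ℝ), dist (γ s) (γ t) = |s - t|) ∧
    SeqConvToBoundary (fun n => γ n) a

/-- `γ` is a biinfinite geodesic from the boundary point `b` to the boundary point `a`. -/
def IsGeodesicLine (γ : ℝ → X) (b a : GromovBoundary X) : Prop :=
  (∀ s t : ℝ, dist (γ s) (γ t) = |s - t|) ∧
    SeqConvToBoundary (fun n => γ n) a ∧ SeqConvToBoundary (fun n => γ (-(n : ℝ))) b

/-- The Busemann function `β_a(y,x)`. -/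
def busemann (a : GromovBoundary X) (y x : X) : ℝ :=
  sSup {r : ℝ | ∃ γ : ℝ → X, IsGeodesicRayTo γ x a ∧
    r = Filter.limsup (fun t : ℝ => dist y (γ t) - t) Filter.atTop}

section Cochains

variable {G : Type*} {E : Type*} [AddCommGroup E]

/-- The homogeneous coboundary of a `1`-cochain. -/
def coboundaryOf (h : G → G → E) : G → G → G → E :=
  fun a b c => h b c - h a c + h a b

/-- The homogeneous cocycle condition for a `2`-cochain (a function of three variables). -/
def IsCocycle3 (f : G → G → G → E) : Prop :=
  ∀ a b c d : G, f b c d - f a c d + f a b d - f a b c = 0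

end Cochains

/-- `ρ` is a distance function. -/
def IsMetricDist {α : Type*} (ρ : α → α → ℝ) : Prop :=
  (∀ a, ρ a a = 0) ∧ (∀ a b, a ≠ b → 0 < ρ a b) ∧ (∀ a b, ρ a b = ρ b a) ∧
    ∀ a b c, ρ a c ≤ ρ a b + ρ b c

/-- The topology induced by a distance function. -/
def distTopology {α : Type*} (ρ : α → α → ℝ) : TopologicalSpace α :=
  TopologicalSpace.generateFrom {U | ∃ (c : α) (r : ℝ), U = {y | ρ c y < r}}

/-- A topological space is locally euclidean. -/
def LocallyEuclidean (G : Type*) [TopologicalSpace G] : Prop :=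
  ∃ n : ℕ, ∀ x : G, ∃ U : Set G, IsOpen U ∧ x ∈ U ∧
    ∃ V : Set (Fin n → ℝ), IsOpen V ∧ Nonempty (U ≃ₜ V)

/-- A proper cocompact continuous isometric action of `L` on a proper geodesic Gromov
hyperbolic space. -/
structure GeomHypActionOn (L : Type*) [Group L] [TopologicalSpace L]
    (Y : Type) [MetricSpace Y] where
  properY : ProperSpace Y
  geodesicY : GeodesicSpace Y
  hypY : GromovHyperbolic Y
  act : L →* Iso Y
  continuous_act : Continuous fun p : L × Y => act p.1 p.2
  proper_act : ∀ K : Set Y, IsCompact K → IsCompact {g : L | ¬Disjoint ((act g) '' K) K}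
  cocompact_act : ∃ K : Set Y, IsCompact K ∧ ⋃ g : L, (act g) '' K = Set.univ

/-- `L` acts geometrically on some proper geodesic Gromov hyperbolic space. (For a
connected semisimple Lie group with finite center this characterizes the groups of
real rank one.) -/
def ActsGeometricallyOnHypSpace (L : Type*) [Group L] [TopologicalSpace L] : Prop :=
  ∃ (Y : Type) (m : MetricSpace Y), Nonempty (@GeomHypActionOn L _ _ Y m)

/-- `L` is a simple Lie group of (real) rank one. -/
def IsSimpleLieGroupOfRankOne (L : Type*) [Group L] [TopologicalSpace L] : Prop :=
  IsTopologicalGroup L ∧ LocallyEuclidean L ∧ IsConnected (Set.univ : Set L) ∧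
    (∃ g h : L, g * h ≠ h * g) ∧ ¬IsCompact (Set.univ : Set L) ∧
    (∀ N : Subgroup L, N.Normal → N ≤ Subgroup.center L ∨ N = ⊤) ∧
    ActsGeometricallyOnHypSpace L

/-- `G` is a compact extension of a simple Lie group of rank one: it has a compact normal
subgroup such that the quotient is a simple Lie group of rank one. -/
def IsCompactExtensionOfRankOneSimple (G : Type*) [Group G] [TopologicalSpace G] : Prop :=
  ∃ K : Subgroup G, ∃ hK : K.Normal, IsCompact (K : Set G) ∧
    (letI := hK; IsSimpleLieGroupOfRankOne (G ⧸ K))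

/-- `G` is a compact extension of a totally disconnected locally compact group. -/
def IsCompactExtensionOfTotallyDisconnected (G : Type*) [Group G] [TopologicalSpace G] : Prop :=
  ∃ K : Subgroup G, K.Normal ∧ IsCompact (K : Set G) ∧
    TotallyDisconnectedSpace (G ⧸ K) ∧ LocallyCompactSpace (G ⧸ K)

/-- Semisimplicity of a Lie group: the solvable radical is trivial. -/
def HasTrivialSolvableRadical (G : Type*) [Group G] [TopologicalSpace G] : Prop :=
  ∀ N : Subgroup G, N.Normal → IsClosed (N : Set G) → IsConnected (N : Set G) →
    IsSolvable N → N = ⊥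

/-- All compact normal subgroups are finite (no compact factors, for a semisimple Lie
group with finite center). -/
def HasNoCompactFactors (G : Type*) [Group G] [TopologicalSpace G] : Prop :=
  ∀ N : Subgroup G, N.Normal → IsCompact (N : Set G) → (N : Set G).Finite

/-- The center of `G` is finite. -/
def HasFiniteCenter (G : Type*) [Group G] : Prop :=
  (Subgroup.center G : Set G).Finite

/-- For a semisimple Lie group with finite center and no compact factors: rank at least
two, i.e. the group is noncompact and not of rank one (it acts geometrically on no
Gromov hyperbolic space). -/
def HasRankAtLeastTwo (G : Type*) [Group G] [TopologicalSpace G] : Prop :=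
  ¬IsCompact (Set.univ : Set G) ∧ ¬ActsGeometricallyOnHypSpace G

/-- `G` has no factors of rank one: there is no continuous surjective homomorphism from
`G` onto a simple Lie group of rank one. -/
def HasNoRankOneFactors (G : Type*) [Group G] [TopologicalSpace G] : Prop :=
  ∀ (L : Type) [Group L] [TopologicalSpace L],
    IsSimpleLieGroupOfRankOne L → ∀ f : G →* L, Continuous f → ¬Function.Surjective f

/-- `Γ` is a lattice in `G` (with respect to the Haar measure `μ`): a discrete subgroup
admitting a Borel fundamental domain of finite Haar measure. -/
def IsLattice {G : Type*} [Group G] [TopologicalSpace G] [MeasurableSpace G]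
    (Γ : Subgroup G) (μ : Measure G) : Prop :=
  IsClosed (Γ : Set G) ∧ DiscreteTopology Γ ∧
    ∃ D : Set G, MeasurableSet D ∧ μ D ≠ ⊤ ∧ ∀ g : G, ∃! γ : Γ, (γ : G) * g ∈ D

/-- `Γ` is an irreducible lattice in `G`: its projection to each factor is dense. -/
def IsIrreducibleLattice {G : Type*} [Group G] [TopologicalSpace G] [MeasurableSpace G]
    (Γ : Subgroup G) (μ : Measure G) : Prop :=
  IsLattice Γ μ ∧ ∀ N : Subgroup G, N.Normal → IsClosed (N : Set G) →
    ¬IsCompact (N : Set G) → N ≠ ⊤ → Dense ((Γ ⊔ N : Subgroup G) : Set G)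

/-- Amenability of a topological group: there is a left-invariant mean on the bounded
continuous functions. -/
def IsAmenableTopGroup (G : Type*) [Group G] [TopologicalSpace G] : Prop :=
  ∃ m : BoundedContinuousFunction G ℝ →ₗ[ℝ] ℝ,
    (∀ f : BoundedContinuousFunction G ℝ, (∀ x, 0 ≤ f x) → 0 ≤ m f) ∧
    m (BoundedContinuousFunction.const G 1) = 1 ∧
    ∀ (g : G) (f f' : BoundedContinuousFunction G ℝ), (∀ x, f' x = f (g * x)) → m f' = m f

/-- The action of `Γ` on `(S,ν)` is measure preserving. -/
def IsMeasurePreservingSMul (Γ : Type*) [Group Γ] (S : Type*) [MeasurableSpace S]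
    [MulAction Γ S] (ν : Measure S) : Prop :=
  ∀ γ : Γ, MeasurePreserving (fun s : S => γ • s) ν ν

/-- The action of `Γ` on `(S,ν)` is mildly mixing: there are no nontrivial recurrent
sets. -/
def MildlyMixingSMul (Γ : Type*) [Group Γ] (S : Type*) [MeasurableSpace S] [MulAction Γ S]
    (ν : Measure S) : Prop :=
  ∀ A : Set S, MeasurableSet A → ν A ≠ 0 → ν A ≠ ν Set.univ →
    ∀ g : ℕ → Γ, Tendsto g atTop Filter.cofinite →
      Filter.liminf (fun i => ν (symmDiff A (g i • A))) atTop ≠ 0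

/-- An `Iso X`-valued cocycle for a measure preserving action of `Γ` on `(S,ν)`. -/
def IsIsoCocycle {Γ : Type*} [Group Γ] {S : Type*} [MeasurableSpace S] [MulAction Γ S]
    (ν : Measure S) {X : Type*} [MetricSpace X] (α : Γ → S → Iso X) : Prop :=
  (∀ γ : Γ, @Measurable S (Iso X) _ (borel (Iso X)) (α γ)) ∧
    ∀ g h : Γ, ∀ᵐ s ∂ν, α (g * h) s = α g (h • s) * α h s

/-- The cocycle `α` is cohomologous to a cocycle taking values in the subgroup `H`. -/
def IsCohomologousToCocycleInto {Γ : Type*} [Group Γ] {S : Type*} [MeasurableSpace S]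
    [MulAction Γ S] (ν : Measure S) {X : Type*} [MetricSpace X] (α : Γ → S → Iso X)
    (H : Subgroup (Iso X)) : Prop :=
  ∃ β : Γ → S → Iso X, IsIsoCocycle ν β ∧ (∀ γ : Γ, ∀ᵐ s ∂ν, β γ s ∈ H) ∧
    ∃ φ : S → Iso X, @Measurable S (Iso X) _ (borel (Iso X)) φ ∧
      ∀ γ : Γ, ∀ᵐ s ∂ν, φ (γ • s) * α γ s = β γ s * φ s

/-- `(B, lam)` is a strong boundary for `G`: a standard Borel `G`-space with a
quasi-invariant ergodic probability measure such that the action is amenable (here: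
admits equivariant Furstenberg maps into spaces of probability measures on compact
metrizable `G`-spaces) and doubly ergodic with coefficients in every separable Banach
module for `G`. -/
def IsStrongBoundary (G : Type*) [Group G] [TopologicalSpace G] [MeasurableSpace G]
    (B : Type*) [MeasurableSpace B] [MulAction G B] (lam : Measure B) : Prop :=
  IsProbabilityMeasure lam ∧
  Measurable (fun p : G × B => p.1 • p.2) ∧
  (∀ g : G, Measure.map (fun b : B => g • b) lam ≪ lam ∧
    lam ≪ Measure.map (fun b : B => g • b) lam) ∧
  (∀ A : Set B, MeasurableSet A → (∀ g : G, (fun b : B => g • b) ⁻¹' A = A) →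
    lam A = 0 ∨ lam A = 1) ∧
  (∀ (Z : Type) [TopologicalSpace Z] [CompactSpace Z] [TopologicalSpace.MetrizableSpace Z]
      [MeasurableSpace Z] [BorelSpace Z] (actZ : G → Z → Z),
      Continuous (fun p : G × Z => actZ p.1 p.2) →
      (∀ z : Z, actZ 1 z = z) → (∀ g h z, actZ (g * h) z = actZ g (actZ h z)) →
      ∃ Φ : B → ProbabilityMeasure Z,
        @Measurable B (ProbabilityMeasure Z) _ (borel (ProbabilityMeasure Z)) Φ ∧
        ∀ g : G, ∀ᵐ b ∂lam, (Φ (g • b) : Measure Z) = Measure.map (actZ g) (Φ b : Measure Z)) ∧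
  (∀ (E : Type) [NormedAddCommGroup E] [NormedSpace ℝ E] [MeasurableSpace E] [BorelSpace E]
      [TopologicalSpace.SeparableSpace E] (actE : G → E → E),
      (∀ v : E, actE 1 v = v) → (∀ g h v, actE (g * h) v = actE g (actE h v)) →
      (∀ g : G, IsLinearMap ℝ (actE g)) → (∀ (g : G) (v : E), ‖actE g v‖ = ‖v‖) →
      Continuous (fun p : G × E => actE p.1 p.2) →
      ∀ F : B × B → E, Measurable F → (∃ C, ∀ p, ‖F p‖ ≤ C) →
        (∀ g : G, ∀ᵐ p ∂(lam.prod lam), F (g • p.1, g • p.2) = actE g (F p)) →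
        ∃ c : E, F =ᵐ[lam.prod lam] fun _ => c)

/-- `X` has bounded growth: for some `b > 0`, every ball of radius `R ≥ 1` contains at
most `b·e^{bR}` disjoint balls of radius `1`. -/
def BoundedGrowth (X : Type*) [MetricSpace X] : Prop :=
  ∃ b : ℝ, 0 < b ∧ ∀ R : ℝ, 1 ≤ R → ∀ x : X, ∀ t : Finset X,
    (∀ y ∈ t, Metric.ball y 1 ⊆ Metric.ball x R) →
    ((t : Set X).Pairwise fun y z => Disjoint (Metric.ball y 1) (Metric.ball z 1)) →
    (t.card : ℝ) ≤ b * Real.exp (b * R)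

/-- The action of `Γ` on `X` given by `ρ` is properly discontinuous. -/
def ProperlyDiscontinuousIso {Γ : Type*} [Group Γ] {X : Type*} [MetricSpace X]
    (ρ : Γ →* Iso X) : Prop :=
  ∀ K : Set X, IsCompact K → {γ : Γ | ¬Disjoint ((ρ γ) '' K) K}.Finite


/-!
Thin triangles give Gromov's four-point condition, and it passes to the Gromov product of
boundary points up to a bounded error. So for small `χ > 0` the function `e^{-χ (ξ|η)_x}` is a
quasi-metric whose constant `K` satisfies `K² ≤ 2`, and Frink's chain construction turns it into
a metric `d_x` on `∂X` comparable to it. The family `(d_x)` is `Iso X`-equivariant and satisfies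
`d_x ≤ e^{χ d(x,y)} d_y`.

Send `(ξ, y)` to the bounded function on `X ⊕ (X × ∂X)` given by `w ↦ τ_y(w)` and
`(w, ζ) ↦ τ_y(w) d_w(ξ, ζ)`, where `τ_y = max 0 (1 - d(y, ·))`, and let `ρ` be the sup distance
of these functions. Equivariance of the construction makes `ρ` invariant, and the estimates
`min 1 (d(y,y')) ≤ ρ`, `d_y(ξ,ξ') ≤ ρ ≤ e^χ d_y(ξ,ξ') + d(y,y')` show that it induces the product
topology.
-/

namespace IsGeodesicSegmentBetween

variable {f : ℝ → X} {x y : X}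

lemma continuousOn (hf : IsGeodesicSegmentBetween f x y) :
    ContinuousOn f (Icc 0 (dist x y)) :=
  (LipschitzOnWith.of_dist_le_mul fun s hs t ht => by
    rw [hf.2.2 s hs t ht, Real.dist_eq, NNReal.coe_one, one_mul]).continuousOn

lemma dist_left (hf : IsGeodesicSegmentBetween f x y) {t : ℝ} (ht : t ∈ Icc 0 (dist x y)) :
    dist x (f t) = t := by
  rw [← hf.1, hf.2.2 0 ⟨le_rfl, dist_nonneg⟩ t ht, zero_sub, abs_neg, abs_of_nonneg ht.1]

lemma dist_right (hf : IsGeodesicSegmentBetween f x y) {t : ℝ} (ht : t ∈ Icc 0 (dist x y)) :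
    dist (f t) y = dist x y - t := by
  conv_lhs => rw [← hf.2.1]
  rw [hf.2.2 t ht _ ⟨dist_nonneg, le_rfl⟩, abs_sub_comm, abs_of_nonneg (sub_nonneg.2 ht.2)]

end IsGeodesicSegmentBetween

namespace IsGeodesicSegmentSet

variable {s : Set X} {x y : X}

lemma left_mem (hs : IsGeodesicSegmentSet s x y) : x ∈ s := by
  obtain ⟨f, hf, rfl⟩ := hs
  exact ⟨0, ⟨le_rfl, dist_nonneg⟩, hf.1⟩

lemma right_mem (hs : IsGeodesicSegmentSet s x y) : y ∈ s := by
  obtain ⟨f, hf, rfl⟩ := hs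
  exact ⟨dist x y, ⟨dist_nonneg, le_rfl⟩, hf.2.1⟩

lemma isCompact (hs : IsGeodesicSegmentSet s x y) : IsCompact s := by
  obtain ⟨f, hf, rfl⟩ := hs
  exact isCompact_Icc.image_of_continuousOn hf.continuousOn

lemma dist_add_dist (hs : IsGeodesicSegmentSet s x y) {p : X} (hp : p ∈ s) :
    dist x p + dist p y = dist x y := by
  obtain ⟨f, hf, rfl⟩ := hs
  obtain ⟨t, ht, rfl⟩ := hp
  rw [hf.dist_left ht, hf.dist_right ht]
  ring

lemma gromovProd_le_dist (hs : IsGeodesicSegmentSet s x y) {p : X} (hp : p ∈ s) (w : X) :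
    gromovProd w x y ≤ dist w p := by
  unfold gromovProd
  linarith [hs.dist_add_dist hp, dist_triangle x p w, dist_triangle y p w, dist_comm p w,
    dist_comm y p]

end IsGeodesicSegmentSet

lemma dist_le_gromovProd_add {a b c : Set X} {x y w : X} (ha : IsGeodesicSegmentSet a x w)
    (hb : IsGeodesicSegmentSet b w y) (hc : IsGeodesicSegmentSet c x y) {p q₁ q₂ : X}
    (hp : p ∈ c) (hq₁ : q₁ ∈ a) (hq₂ : q₂ ∈ b) {ε : ℝ} (h₁ : dist p q₁ ≤ ε)
    (h₂ : dist p q₂ ≤ ε) : dist w p ≤ gromovProd w x y + 2 * ε := by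
  unfold gromovProd
  linarith [ha.dist_add_dist hq₁, hb.dist_add_dist hq₂, hc.dist_add_dist hp,
    dist_triangle x q₁ p, dist_triangle p q₂ y, dist_triangle w q₁ p, dist_triangle w q₂ p,
    dist_comm x w, dist_comm y w, dist_comm q₁ p, dist_comm q₂ p, dist_comm q₁ w]

lemma exists_mem_infDist_le_of_thin {δ : ℝ} (hthin : DeltaThinTriangles X δ) {a b c : Set X}
    {x y w : X} (ha : IsGeodesicSegmentSet a x w) (hb : IsGeodesicSegmentSet b w y)
    (hc : IsGeodesicSegmentSet c x y) :
    ∃ p ∈ c, infDist p a ≤ δ ∧ infDist p b ≤ δ := by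
  obtain ⟨f, hf, rfl⟩ := hc
  obtain ⟨t, ht, hφ⟩ : ∃ t ∈ Icc 0 (dist x y), infDist (f t) a - infDist (f t) b = 0 := by
    refine intermediate_value_Icc dist_nonneg
      (((continuous_infDist_pt a).comp_continuousOn hf.continuousOn).sub
        ((continuous_infDist_pt b).comp_continuousOn hf.continuousOn)) ⟨?_, ?_⟩
    · show infDist (f 0) a - infDist (f 0) b ≤ 0
      rw [hf.1, infDist_zero_of_mem ha.left_mem, zero_sub, neg_nonpos]
      exact infDist_nonneg
    · show 0 ≤ infDist (f (dist x y)) a - infDist (f (dist x y)) b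
      rw [hf.2.1, infDist_zero_of_mem hb.right_mem, sub_zero]
      exact infDist_nonneg
  obtain ⟨q, hq, hpq⟩ := hthin x w y a b _ ha hb ⟨f, hf, rfl⟩ (f t) ⟨t, ht, rfl⟩
  have hmin : min (infDist (f t) a) (infDist (f t) b) ≤ δ := by
    rcases hq with hq | hq
    · exact (min_le_left _ _).trans ((infDist_le_dist_of_mem hq).trans hpq)
    · exact (min_le_right _ _).trans ((infDist_le_dist_of_mem hq).trans hpq)
  rw [sub_eq_zero] at hφ
  rw [hφ, min_self] at hmin
  exact ⟨f t, ⟨t, ht, rfl⟩, hφ ▸ hmin, hmin⟩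

def GromovFourPoint (X : Type*) [MetricSpace X] (δ : ℝ) : Prop :=
  ∀ w x y z : X, min (gromovProd w x z) (gromovProd w z y) - δ ≤ gromovProd w x y

lemma gromovFourPoint_of_thin (hgeo : GeodesicSpace X) {δ : ℝ}
    (hthin : DeltaThinTriangles X δ) : GromovFourPoint X (3 * δ) := by
  intro w x y z
  have segment : ∀ x y : X, ∃ s, IsGeodesicSegmentSet s x y := fun x y =>
    let ⟨f, hf⟩ := hgeo x y; ⟨_, f, hf, rfl⟩
  obtain ⟨a, ha⟩ := segment x w
  obtain ⟨b, hb⟩ := segment w y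
  obtain ⟨c, hc⟩ := segment x y
  obtain ⟨a', ha'⟩ := segment x z
  obtain ⟨b', hb'⟩ := segment z y
  obtain ⟨p, hp, hpa, hpb⟩ := exists_mem_infDist_le_of_thin hthin ha hb hc
  obtain ⟨q₁, hq₁, hpq₁⟩ := ha.isCompact.exists_infDist_eq_dist ⟨x, ha.left_mem⟩ p
  obtain ⟨q₂, hq₂, hpq₂⟩ := hb.isCompact.exists_infDist_eq_dist ⟨y, hb.right_mem⟩ p
  have hupper := dist_le_gromovProd_add ha hb hc hp hq₁ hq₂ (hpq₁ ▸ hpa) (hpq₂ ▸ hpb)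
  obtain ⟨q, hq, hpq⟩ := hthin x z y a' b' c ha' hb' hc p hp
  have hlower : min (gromovProd w x z) (gromovProd w z y) ≤ dist w q := by
    rcases hq with hq | hq
    · exact (min_le_left _ _).trans (ha'.gromovProd_le_dist hq w)
    · exact (min_le_right _ _).trans (hb'.gromovProd_le_dist hq w)
  have := dist_triangle w p q
  linarith

lemma gromovProd_comm (w x y : X) : gromovProd w x y = gromovProd w y x := by
  rw [gromovProd, gromovProd, dist_comm x y, add_comm]

lemma gromovProd_le_add_dist (x y a b : X) :
    gromovProd y a b ≤ gromovProd x a b + dist x y := by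
  have := dist_triangle a x y
  have := dist_triangle b x y
  rw [gromovProd, gromovProd]
  linarith

lemma gromovProd_apply_apply (g : Iso X) (w x y : X) :
    gromovProd (g w) (g x) (g y) = gromovProd w x y := by
  rw [gromovProd_isometry, g.symm_apply_apply]

def seqGromovProd (x : X) (u v : GromovSeq X) : ℝ≥0∞ :=
  liminf (fun p : ℕ × ℕ => ENNReal.ofReal (gromovProd x (u.1 p.1) (v.1 p.2))) atTop

lemma seqGromovProd_eq_top_iff {x : X} {u v : GromovSeq X} :
    seqGromovProd x u v = ⊤ ↔
      Tendsto (fun p : ℕ × ℕ => gromovProd x (u.1 p.1) (v.1 p.2)) atTop atTop := by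
  rw [← ENNReal.tendsto_ofReal_nhds_top]
  exact ⟨fun h => tendsto_of_le_liminf_of_limsup_le h.ge le_top, Tendsto.liminf_eq⟩

lemma gromovRel_iff_seqGromovProd_eq_top {u v : GromovSeq X} :
    gromovRel u v ↔ ∀ x, seqGromovProd x u v = ⊤ := by
  simp only [gromovRel, seqGromovProd_eq_top_iff]

lemma seqGromovProd_self (x : X) (u : GromovSeq X) : seqGromovProd x u u = ⊤ :=
  seqGromovProd_eq_top_iff.2 (u.2 x)

lemma seqGromovProd_comm (x : X) (u v : GromovSeq X) :
    seqGromovProd x u v = seqGromovProd x v u := by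
  rw [seqGromovProd, seqGromovProd, ← prod_atTop_atTop_eq]
  conv_lhs => rw [prod_comm, ← liminf_comp]
  simp only [Function.comp_def, Prod.fst_swap, Prod.snd_swap, gromovProd_comm x (u.1 _)]

lemma seqGromovProd_le_add_dist (x y : X) (u v : GromovSeq X) :
    seqGromovProd y u v ≤ seqGromovProd x u v + ENNReal.ofReal (dist x y) := by
  calc seqGromovProd y u v
      ≤ liminf (fun p : ℕ × ℕ => ENNReal.ofReal (gromovProd x (u.1 p.1) (v.1 p.2)) +
          ENNReal.ofReal (dist x y)) atTop :=
        liminf_le_liminf (Eventually.of_forall fun p =>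
          (ENNReal.ofReal_le_ofReal (gromovProd_le_add_dist x y _ _)).trans ENNReal.ofReal_add_le)
    _ = _ := liminf_add_const _ _ _ (by isBoundedDefault) (by isBoundedDefault)

lemma seqGromovProd_map (g : Iso X) (x : X) (u v : GromovSeq X) :
    seqGromovProd (g x) (u.map g) (v.map g) = seqGromovProd x u v := by
  simp only [seqGromovProd, GromovSeq.map, gromovProd_apply_apply]

section SeqFourPoint

variable {δ : ℝ}

lemma exists_lt_gromovProd_of_lt {x : X} {u v : GromovSeq X} {r : ℝ≥0}
    (h : (r : ℝ≥0∞) < seqGromovProd x u v) :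
    ∃ N, ∀ i ≥ N, ∀ j ≥ N, (r : ℝ) < gromovProd x (u.1 i) (v.1 j) := by
  refine (eventually_atTop_prod_self'
    (p := fun p => (r : ℝ) < gromovProd x (u.1 p.1) (v.1 p.2))).1
    ((eventually_lt_of_lt_liminf h).mono fun p hp => ?_)
  rwa [ENNReal.lt_ofReal_iff_toReal_lt ENNReal.coe_ne_top, ENNReal.coe_toReal] at hp

lemma min_seqGromovProd_le (hX : GromovFourPoint X δ) (x : X) (u v w : GromovSeq X) :
    min (seqGromovProd x u v) (seqGromovProd x v w) ≤
      seqGromovProd x u w + ENNReal.ofReal δ := by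
  refine ENNReal.le_of_forall_nnreal_lt fun r hr => ?_
  obtain ⟨N₁, hN₁⟩ := exists_lt_gromovProd_of_lt (hr.trans_le (min_le_left _ _))
  obtain ⟨N₂, hN₂⟩ := exists_lt_gromovProd_of_lt (hr.trans_le (min_le_right _ _))
  set N := max N₁ N₂
  -- route every pair `(u i, w j)` through the single point `v N`
  have hev : ∀ᶠ p : ℕ × ℕ in atTop, (r : ℝ) - δ ≤ gromovProd x (u.1 p.1) (w.1 p.2) := by
    refine eventually_atTop_prod_self'.2 ⟨N, fun i hi j hj => ?_⟩
    have h₁ := hN₁ i (le_of_max_le_left hi) N (le_max_left _ _)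
    have h₂ := hN₂ N (le_max_right _ _) j (le_of_max_le_right hj)
    have := hX x (u.1 i) (w.1 j) (v.1 N)
    have := le_min h₁.le h₂.le
    dsimp only
    linarith
  calc (r : ℝ≥0∞) = ENNReal.ofReal ((r - δ) + δ) := by simp
    _ ≤ ENNReal.ofReal (r - δ) + ENNReal.ofReal δ := ENNReal.ofReal_add_le
    _ ≤ seqGromovProd x u w + ENNReal.ofReal δ := by
      gcongr
      exact le_liminf_of_le (by isBoundedDefault)
        (hev.mono fun p hp => ENNReal.ofReal_le_ofReal hp)

lemma gromovRel_equivalence (hX : GromovFourPoint X δ) : Equivalence (gromovRel (X := X)) where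
  refl u := gromovRel_iff_seqGromovProd_eq_top.2 fun x => seqGromovProd_self x u
  symm h := gromovRel_iff_seqGromovProd_eq_top.2 fun x => by
    rw [seqGromovProd_comm, gromovRel_iff_seqGromovProd_eq_top.1 h x]
  trans {u v w} h₁ h₂ := gromovRel_iff_seqGromovProd_eq_top.2 fun x => by
    have := min_seqGromovProd_le hX x u v w
    rwa [gromovRel_iff_seqGromovProd_eq_top.1 h₁ x, gromovRel_iff_seqGromovProd_eq_top.1 h₂ x,
      min_self, top_le_iff, ENNReal.add_eq_top, or_iff_left ENNReal.ofReal_ne_top] at this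

end SeqFourPoint

lemma seqGromovProd_le_gromovProdB {x : X} {ξ η : GromovBoundary X} {u v : GromovSeq X}
    (hu : Quot.mk gromovRel u = ξ) (hv : Quot.mk gromovRel v = η) :
    seqGromovProd x u v ≤ gromovProdB x ξ η :=
  le_iSup₂_of_le u hu (le_iSup₂_of_le v hv le_rfl)

lemma gromovProdB_self (x : X) (ξ : GromovBoundary X) : gromovProdB x ξ ξ = ⊤ := by
  obtain ⟨u, hu⟩ := Quot.exists_rep ξ
  exact top_le_iff.1 (seqGromovProd_self x u ▸ seqGromovProd_le_gromovProdB hu hu)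

lemma gromovProdB_comm (x : X) (ξ η : GromovBoundary X) :
    gromovProdB x ξ η = gromovProdB x η ξ := by
  have key : ∀ ξ η : GromovBoundary X, gromovProdB x ξ η ≤ gromovProdB x η ξ :=
    fun _ _ => iSup₂_le fun u hu => iSup₂_le fun v hv =>
      (seqGromovProd_comm x u v).trans_le (seqGromovProd_le_gromovProdB hv hu)
  exact (key ξ η).antisymm (key η ξ)

lemma gromovProdB_le_add_dist (x y : X) (ξ η : GromovBoundary X) :
    gromovProdB y ξ η ≤ gromovProdB x ξ η + ENNReal.ofReal (dist x y) :=
  iSup₂_le fun _ hu => iSup₂_le fun _ hv => (seqGromovProd_le_add_dist x y _ _).trans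
    (add_le_add_left (seqGromovProd_le_gromovProdB hu hv) _)

lemma boundaryMap_symm_apply (g : Iso X) (ξ : GromovBoundary X) :
    boundaryMap g.symm (boundaryMap g ξ) = ξ := by
  induction ξ using Quot.ind with
  | _ u => exact congrArg (Quot.mk _) (Subtype.ext (funext fun n => g.symm_apply_apply _))

lemma boundaryMap_surjective (g : Iso X) : Function.Surjective (boundaryMap g) :=
  fun ξ => ⟨boundaryMap g.symm ξ, by simpa using boundaryMap_symm_apply g.symm ξ⟩

lemma gromovProdB_boundaryMap (g : Iso X) (x : X) (ξ η : GromovBoundary X) :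
    gromovProdB (g x) (boundaryMap g ξ) (boundaryMap g η) = gromovProdB x ξ η := by
  have key : ∀ (g : Iso X) (x : X) (ξ η : GromovBoundary X),
      gromovProdB x ξ η ≤ gromovProdB (g x) (boundaryMap g ξ) (boundaryMap g η) :=
    fun g x _ _ => iSup₂_le fun u hu => iSup₂_le fun v hv =>
      (seqGromovProd_map g x u v).symm.trans_le
        (seqGromovProd_le_gromovProdB (hu ▸ rfl) (hv ▸ rfl))
  refine le_antisymm ?_ (key g x ξ η)
  simpa only [g.symm_apply_apply, boundaryMap_symm_apply] using
    key g.symm (g x) (boundaryMap g ξ) (boundaryMap g η)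

section BoundaryFourPoint

variable {δ : ℝ}

lemma gromovRel_of_mk_eq (hX : GromovFourPoint X δ) {u v : GromovSeq X}
    (h : Quot.mk gromovRel u = Quot.mk gromovRel v) : gromovRel u v :=
  (gromovRel_equivalence hX).eqvGen_iff.1 (Quot.eqvGen_exact h)

lemma seqGromovProd_le_of_gromovRel (hX : GromovFourPoint X δ) (hδ : 0 ≤ δ) (x : X)
    {u u' v v' : GromovSeq X} (hu : gromovRel u u') (hv : gromovRel v v') :
    seqGromovProd x u' v' ≤ seqGromovProd x u v + ENNReal.ofReal (2 * δ) := by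
  have h₁ := min_seqGromovProd_le hX x u u' v'
  have h₂ := min_seqGromovProd_le hX x u v' v
  rw [gromovRel_iff_seqGromovProd_eq_top.1 hu, min_top_left] at h₁
  rw [gromovRel_iff_seqGromovProd_eq_top.1 ((gromovRel_equivalence hX).symm hv) x,
    min_top_right] at h₂
  calc seqGromovProd x u' v' ≤ seqGromovProd x u v + ENNReal.ofReal δ + ENNReal.ofReal δ :=
        h₁.trans (by gcongr)
    _ = seqGromovProd x u v + ENNReal.ofReal (2 * δ) := by
        rw [add_assoc, ← ENNReal.ofReal_add hδ hδ, two_mul]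

lemma gromovProdB_le_seqGromovProd (hX : GromovFourPoint X δ) (hδ : 0 ≤ δ) {x : X}
    {ξ η : GromovBoundary X} {u v : GromovSeq X} (hu : Quot.mk gromovRel u = ξ)
    (hv : Quot.mk gromovRel v = η) :
    gromovProdB x ξ η ≤ seqGromovProd x u v + ENNReal.ofReal (2 * δ) :=
  iSup₂_le fun _ hu' => iSup₂_le fun _ hv' => seqGromovProd_le_of_gromovRel hX hδ x
    (gromovRel_of_mk_eq hX (hu.trans hu'.symm)) (gromovRel_of_mk_eq hX (hv.trans hv'.symm))

lemma eq_of_gromovProdB_eq_top (hX : GromovFourPoint X δ) (hδ : 0 ≤ δ) {x : X}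
    {ξ η : GromovBoundary X} (h : gromovProdB x ξ η = ⊤) : ξ = η := by
  obtain ⟨u, rfl⟩ := Quot.exists_rep ξ
  obtain ⟨v, rfl⟩ := Quot.exists_rep η
  have hx := gromovProdB_le_seqGromovProd (x := x) hX hδ (u := u) (v := v) rfl rfl
  rw [h, top_le_iff, ENNReal.add_eq_top, or_iff_left ENNReal.ofReal_ne_top] at hx
  refine Quot.sound (gromovRel_iff_seqGromovProd_eq_top.2 fun y => ?_)
  have hy := seqGromovProd_le_add_dist y x u v
  rwa [hx, top_le_iff, ENNReal.add_eq_top, or_iff_left ENNReal.ofReal_ne_top] at hy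

lemma min_gromovProdB_le (hX : GromovFourPoint X δ) (hδ : 0 ≤ δ) (x : X)
    (ξ η ζ : GromovBoundary X) :
    min (gromovProdB x ξ η) (gromovProdB x η ζ) ≤
      gromovProdB x ξ ζ + ENNReal.ofReal (3 * δ) := by
  obtain ⟨u, hu⟩ := Quot.exists_rep ξ
  obtain ⟨v, hv⟩ := Quot.exists_rep η
  obtain ⟨w, hw⟩ := Quot.exists_rep ζ
  calc min (gromovProdB x ξ η) (gromovProdB x η ζ)
      ≤ min (seqGromovProd x u v) (seqGromovProd x v w) + ENNReal.ofReal (2 * δ) := by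
        rw [← min_add_add_right]
        exact min_le_min (gromovProdB_le_seqGromovProd hX hδ hu hv)
          (gromovProdB_le_seqGromovProd hX hδ hv hw)
    _ ≤ gromovProdB x ξ ζ + ENNReal.ofReal δ + ENNReal.ofReal (2 * δ) := by
        gcongr
        exact (min_seqGromovProd_le hX x u v w).trans
          (add_le_add_left (seqGromovProd_le_gromovProdB hu hw) _)
    _ = gromovProdB x ξ ζ + ENNReal.ofReal (3 * δ) := by
        rw [add_assoc, ← ENNReal.ofReal_add hδ (by positivity)]
        ring_nf

end BoundaryFourPoint

lemma dist_ofPreNNDist_map_le {Y Z : Type*} {d : Y → Y → ℝ≥0} {d' : Z → Z → ℝ≥0}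
    (hd : ∀ a, d a a = 0) (hd' : ∀ a, d' a a = 0) (hc : ∀ a b, d a b = d b a)
    (hc' : ∀ a b, d' a b = d' b a) (f : Y → Z) (C : ℝ≥0)
    (h : ∀ a b, d' (f a) (f b) ≤ C * d a b) (a b : Y) :
    @dist Z (PseudoMetricSpace.ofPreNNDist d' hd' hc').toDist (f a) (f b) ≤
      C * @dist Y (PseudoMetricSpace.ofPreNNDist d hd hc).toDist a b := by
  have chain : ∀ l₁ l₂ : List Y,
      (List.zipWith d' (l₁.map f) (l₂.map f)).sum ≤ C * (List.zipWith d l₁ l₂).sum := by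
    intro l₁
    induction l₁ with
    | nil => simp
    | cons a l₁ ih =>
      rintro (_ | ⟨b, l₂⟩)
      · simp
      · simpa [mul_add] using add_le_add (h a b) (ih l₂)
  rw [PseudoMetricSpace.dist_ofPreNNDist, PseudoMetricSpace.dist_ofPreNNDist, ← NNReal.coe_mul,
    NNReal.coe_le_coe, NNReal.mul_iInf]
  refine le_ciInf fun l => (ciInf_le (OrderBot.bddBelow _) (l.map f)).trans ?_
  simpa using chain (a :: l) (l ++ [b])

/-- The value `0` at `⊤` is imposed by hand, since `(⊤ : ℝ≥0∞).toReal = 0`. -/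
def visualGauge (χ : ℝ) (t : ℝ≥0∞) : ℝ≥0 :=
  if t = ⊤ then 0 else Real.toNNReal (Real.exp (-(χ * t.toReal)))

section VisualGauge

variable {χ : ℝ} {t : ℝ≥0∞}

@[simp]
lemma visualGauge_top (χ : ℝ) : visualGauge χ ⊤ = 0 := if_pos rfl

lemma coe_visualGauge (ht : t ≠ ⊤) : (visualGauge χ t : ℝ) = Real.exp (-(χ * t.toReal)) := by
  rw [visualGauge, if_neg ht, Real.coe_toNNReal _ (Real.exp_pos _).le]

lemma visualGauge_eq_zero_iff : visualGauge χ t = 0 ↔ t = ⊤ := by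
  refine ⟨fun h => by_contra fun ht => ?_, fun h => h ▸ visualGauge_top χ⟩
  have := coe_visualGauge (χ := χ) ht
  rw [h, NNReal.coe_zero] at this
  exact (Real.exp_pos _).ne this

lemma visualGauge_le_one (hχ : 0 ≤ χ) (t : ℝ≥0∞) : visualGauge χ t ≤ 1 := by
  by_cases ht : t = ⊤
  · simp [ht]
  · rw [← NNReal.coe_le_coe, coe_visualGauge ht, NNReal.coe_one, Real.exp_le_one_iff,
      neg_nonpos]
    exact mul_nonneg hχ ENNReal.toReal_nonneg

lemma visualGauge_antitone (hχ : 0 ≤ χ) : Antitone (visualGauge χ) := by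
  intro s t hst
  by_cases ht : t = ⊤
  · simp [ht]
  have hs : s ≠ ⊤ := ne_top_of_le_ne_top ht hst
  rw [← NNReal.coe_le_coe, coe_visualGauge ht, coe_visualGauge hs, Real.exp_le_exp, neg_le_neg_iff]
  exact mul_le_mul_of_nonneg_left (ENNReal.toReal_mono ht hst) hχ

lemma coe_visualGauge_add_ofReal {c : ℝ} (hc : 0 ≤ c) (t : ℝ≥0∞) :
    (visualGauge χ (t + ENNReal.ofReal c) : ℝ) = Real.exp (-(χ * c)) * visualGauge χ t := by
  by_cases ht : t = ⊤
  · simp [ht]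
  have htc : t + ENNReal.ofReal c ≠ ⊤ := ENNReal.add_ne_top.2 ⟨ht, ENNReal.ofReal_ne_top⟩
  rw [coe_visualGauge ht, coe_visualGauge htc, ← Real.exp_add,
    ENNReal.toReal_add ht ENNReal.ofReal_ne_top, ENNReal.toReal_ofReal hc]
  ring_nf

lemma visualGauge_lt_exp_iff (hχ : 0 < χ) {r : ℝ} (hr : 0 ≤ r) :
    (visualGauge χ t : ℝ) < Real.exp (-(χ * r)) ↔ ENNReal.ofReal r < t := by
  by_cases ht : t = ⊤
  · simp [ht, Real.exp_pos]
  rw [coe_visualGauge ht, Real.exp_lt_exp, neg_lt_neg_iff, mul_lt_mul_iff_right₀ hχ,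
    ENNReal.ofReal_lt_iff_lt_toReal hr ht]

end VisualGauge

section VisualQuasiDist

variable {χ δ : ℝ}

lemma visualGauge_gromovProdB_le_mul_max (hX : GromovFourPoint X δ) (hδ : 0 ≤ δ) (hχ : 0 ≤ χ)
    (x : X) (ξ η ζ : GromovBoundary X) :
    (visualGauge χ (gromovProdB x ξ ζ) : ℝ) ≤ Real.exp (χ * (3 * δ)) *
      max (visualGauge χ (gromovProdB x ξ η)) (visualGauge χ (gromovProdB x η ζ)) := by
  have h := visualGauge_antitone hχ (min_gromovProdB_le hX hδ x ξ η ζ)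
  rwa [(visualGauge_antitone hχ).map_min, ← NNReal.coe_le_coe,
    coe_visualGauge_add_ofReal (by positivity), Real.exp_neg,
    inv_mul_le_iff₀ (Real.exp_pos _)] at h

lemma visualGauge_gromovProdB_le_exp_mul (hχ : 0 ≤ χ) (x y : X) (ξ η : GromovBoundary X) :
    (visualGauge χ (gromovProdB x ξ η) : ℝ) ≤
      Real.exp (χ * dist x y) * visualGauge χ (gromovProdB y ξ η) := by
  have h := visualGauge_antitone hχ (gromovProdB_le_add_dist x y ξ η)
  rwa [← NNReal.coe_le_coe, coe_visualGauge_add_ofReal dist_nonneg, Real.exp_neg,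
    inv_mul_le_iff₀ (Real.exp_pos _)] at h

end VisualQuasiDist

lemma visualGauge_gromovProdB_self (χ : ℝ) (x : X) (ξ : GromovBoundary X) :
    visualGauge χ (gromovProdB x ξ ξ) = 0 := by
  rw [gromovProdB_self, visualGauge_top]

lemma visualGauge_gromovProdB_comm (χ : ℝ) (x : X) (ξ η : GromovBoundary X) :
    visualGauge χ (gromovProdB x ξ η) = visualGauge χ (gromovProdB x η ξ) := by
  rw [gromovProdB_comm]

/-- The visual metric `δ_x`: Frink's chain pseudometric of the quasi-metric `e^{-χ (ξ|η)_x}`. -/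
@[reducible]
def visualPseudoMetric (χ : ℝ) (x : X) : PseudoMetricSpace (GromovBoundary X) :=
  PseudoMetricSpace.ofPreNNDist (fun ξ η => visualGauge χ (gromovProdB x ξ η))
    (visualGauge_gromovProdB_self χ x) (visualGauge_gromovProdB_comm χ x)

def visualDist (χ : ℝ) (x : X) (ξ η : GromovBoundary X) : ℝ :=
  @dist _ (visualPseudoMetric χ x).toDist ξ η

section VisualDist

variable {χ δ : ℝ}

lemma visualDist_self (χ : ℝ) (x : X) (ξ : GromovBoundary X) : visualDist χ x ξ ξ = 0 :=
  @dist_self _ (visualPseudoMetric χ x) ξ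

lemma visualDist_triangle (χ : ℝ) (x : X) (ξ η ζ : GromovBoundary X) :
    visualDist χ x ξ ζ ≤ visualDist χ x ξ η + visualDist χ x η ζ :=
  @dist_triangle _ (visualPseudoMetric χ x) ξ η ζ

lemma visualDist_nonneg (χ : ℝ) (x : X) (ξ η : GromovBoundary X) : 0 ≤ visualDist χ x ξ η :=
  @dist_nonneg _ (visualPseudoMetric χ x) ξ η

lemma abs_visualDist_sub_le (χ : ℝ) (x : X) (ξ η ζ : GromovBoundary X) :
    |visualDist χ x ξ ζ - visualDist χ x η ζ| ≤ visualDist χ x ξ η :=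
  @abs_dist_sub_le _ (visualPseudoMetric χ x) ξ η ζ

lemma visualDist_le_visualGauge (χ : ℝ) (x : X) (ξ η : GromovBoundary X) :
    visualDist χ x ξ η ≤ visualGauge χ (gromovProdB x ξ η) :=
  PseudoMetricSpace.dist_ofPreNNDist_le _ _ _ ξ η

lemma visualDist_le_one (hχ : 0 ≤ χ) (x : X) (ξ η : GromovBoundary X) :
    visualDist χ x ξ η ≤ 1 :=
  (visualDist_le_visualGauge χ x ξ η).trans (by exact_mod_cast visualGauge_le_one hχ _)

/-- Frink's lemma applies because the quasi-metric constant `e^{3χδ}` has square at most `2`. -/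
lemma visualGauge_le_two_mul_visualDist (hX : GromovFourPoint X δ) (hδ : 0 ≤ δ) (hχ : 0 ≤ χ)
    (hχδ : 6 * χ * δ ≤ Real.log 2) (x : X) (ξ η : GromovBoundary X) :
    (visualGauge χ (gromovProdB x ξ η) : ℝ) ≤ 2 * visualDist χ x ξ η := by
  refine PseudoMetricSpace.le_two_mul_dist_ofPreNNDist
    (fun ξ η => visualGauge χ (gromovProdB x ξ η)) _ _ (fun a b c d => ?_) ξ η
  set K := Real.exp (χ * (3 * δ))
  have hK : 1 ≤ K := Real.one_le_exp (by positivity)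
  have hK2 : K * K ≤ 2 := by
    rw [← Real.exp_add]
    calc _ ≤ Real.exp (Real.log 2) := Real.exp_le_exp.2 (by linarith)
      _ = 2 := Real.exp_log two_pos
  have hq := visualGauge_gromovProdB_le_mul_max hX hδ hχ x
  rw [← NNReal.coe_le_coe, NNReal.coe_mul, NNReal.coe_two, NNReal.coe_max, NNReal.coe_max]
  set m := max (visualGauge χ (gromovProdB x a b) : ℝ)
    (max (visualGauge χ (gromovProdB x b c)) (visualGauge χ (gromovProdB x c d)))
  have hm : 0 ≤ m := le_max_of_le_left (NNReal.coe_nonneg _)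
  calc (visualGauge χ (gromovProdB x a d) : ℝ)
      ≤ K * max (visualGauge χ (gromovProdB x a b) : ℝ) (visualGauge χ (gromovProdB x b d)) :=
        hq a b d
    _ ≤ K * max (visualGauge χ (gromovProdB x a b) : ℝ) (K * m) := by
        gcongr
        exact (hq b c d).trans (by gcongr; exact le_max_right _ _)
    _ ≤ K * (K * m) := by
        gcongr
        exact max_le ((le_max_left _ _).trans (le_mul_of_one_le_left hm hK)) le_rfl
    _ ≤ 2 * m := by rw [← mul_assoc]; gcongr

lemma eq_of_visualDist_eq_zero (hX : GromovFourPoint X δ) (hδ : 0 ≤ δ) (hχ : 0 ≤ χ)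
    (hχδ : 6 * χ * δ ≤ Real.log 2) {x : X} {ξ η : GromovBoundary X}
    (h : visualDist χ x ξ η = 0) : ξ = η := by
  have := visualGauge_le_two_mul_visualDist hX hδ hχ hχδ x ξ η
  rw [h, mul_zero] at this
  refine eq_of_gromovProdB_eq_top hX hδ (x := x) ((visualGauge_eq_zero_iff (χ := χ)).1 ?_)
  exact NNReal.coe_eq_zero.1 (this.antisymm (NNReal.coe_nonneg _))

lemma visualDist_le_exp_mul (hχ : 0 ≤ χ) (x y : X) (ξ η : GromovBoundary X) :
    visualDist χ x ξ η ≤ Real.exp (χ * dist x y) * visualDist χ y ξ η := by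
  have h := dist_ofPreNNDist_map_le (visualGauge_gromovProdB_self χ y)
    (visualGauge_gromovProdB_self χ x) (visualGauge_gromovProdB_comm χ y)
    (visualGauge_gromovProdB_comm χ x) id (Real.toNNReal (Real.exp (χ * dist x y)))
    (fun a b => by
      rw [← NNReal.coe_le_coe, NNReal.coe_mul, Real.coe_toNNReal _ (Real.exp_pos _).le]
      exact visualGauge_gromovProdB_le_exp_mul hχ x y a b) ξ η
  rw [Real.coe_toNNReal _ (Real.exp_pos _).le] at h
  exact h

lemma visualDist_boundaryMap (χ : ℝ) (g : Iso X) (x : X) (ξ η : GromovBoundary X) :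
    visualDist χ (g x) (boundaryMap g ξ) (boundaryMap g η) = visualDist χ x ξ η := by
  have key : ∀ (g : Iso X) (x : X) (ξ η : GromovBoundary X),
      visualDist χ (g x) (boundaryMap g ξ) (boundaryMap g η) ≤ visualDist χ x ξ η := by
    intro g x ξ η
    have h := dist_ofPreNNDist_map_le (visualGauge_gromovProdB_self χ x)
      (visualGauge_gromovProdB_self χ (g x)) (visualGauge_gromovProdB_comm χ x)
      (visualGauge_gromovProdB_comm χ (g x)) (boundaryMap g) 1
      (fun a b => by rw [one_mul, gromovProdB_boundaryMap]) ξ η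
    rw [NNReal.coe_one, one_mul] at h
    exact h
  refine (key g x ξ η).antisymm ?_
  simpa only [g.symm_apply_apply, boundaryMap_symm_apply] using
    key g.symm (g x) (boundaryMap g ξ) (boundaryMap g η)

end VisualDist

section VisualTopology

variable {χ δ : ℝ}

lemma exists_exp_mul_exp_neg_le (hχ : 0 < χ) (a : ℝ) {s : ℝ} (hs : 0 < s) :
    ∃ t : ℝ, 0 ≤ t ∧ Real.exp a * Real.exp (-(χ * t)) ≤ s := by
  refine ⟨max 0 ((a - Real.log s) / χ), le_max_left _ _, ?_⟩
  rw [← Real.exp_add]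
  refine (Real.exp_le_exp.2 ?_).trans (Real.exp_log hs).le
  have := mul_le_mul_of_nonneg_left (le_max_right 0 ((a - Real.log s) / χ)) hχ.le
  rw [mul_div_cancel₀ _ hχ.ne'] at this
  linarith

lemma isOpen_visualBall (hχ : 0 < χ) (x₀ : X) (c : GromovBoundary X) (r : ℝ) :
    IsOpen {η | visualDist χ x₀ c η < r} := by
  intro ξ hξ x
  obtain ⟨t, ht₀, ht⟩ := exists_exp_mul_exp_neg_le hχ (χ * dist x₀ x) (sub_pos.2 hξ)
  refine ⟨ENNReal.ofReal t, ENNReal.ofReal_ne_top, fun η hη => ?_⟩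
  have hgauge := (visualGauge_lt_exp_iff hχ ht₀).2 hη
  have := (visualDist_le_visualGauge χ x₀ ξ η).trans
    (visualGauge_gromovProdB_le_exp_mul hχ.le x₀ x ξ η)
  have := visualDist_triangle χ x₀ c ξ η
  have := mul_lt_mul_of_pos_left hgauge (Real.exp_pos (χ * dist x₀ x))
  show visualDist χ x₀ c η < r
  linarith

lemma exists_visualBall_subset (hX : GromovFourPoint X δ) (hδ : 0 ≤ δ) (hχ : 0 < χ)
    (hχδ : 6 * χ * δ ≤ Real.log 2) (x₀ : X) {U : Set (GromovBoundary X)} (hU : IsOpen U)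
    {ξ : GromovBoundary X} (hξ : ξ ∈ U) : ∃ ε > 0, {η | visualDist χ x₀ ξ η < ε} ⊆ U := by
  obtain ⟨R, hR, hRU⟩ := hU ξ hξ x₀
  refine ⟨Real.exp (-(χ * R.toReal)) / 2, by positivity, fun η hη => hRU ?_⟩
  have := visualGauge_le_two_mul_visualDist hX hδ hχ.le hχδ x₀ ξ η
  have hη : (visualGauge χ (gromovProdB x₀ ξ η) : ℝ) < Real.exp (-(χ * R.toReal)) := by
    change visualDist χ x₀ ξ η < _ at hη
    linarith
  rw [visualGauge_lt_exp_iff hχ ENNReal.toReal_nonneg, ENNReal.ofReal_toReal hR] at hη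
  exact hη

lemma nhds_basis_visualBall (hX : GromovFourPoint X δ) (hδ : 0 ≤ δ) (hχ : 0 < χ)
    (hχδ : 6 * χ * δ ≤ Real.log 2) (x₀ : X) (ξ : GromovBoundary X) :
    (𝓝 ξ).HasBasis (fun ε : ℝ => 0 < ε) (fun ε => {η | visualDist χ x₀ ξ η < ε}) :=
  (nhds_basis_opens ξ).to_hasBasis
    (fun _ ⟨hξU, hU⟩ => exists_visualBall_subset hX hδ hχ hχδ x₀ hU hξU)
    (fun ε hε => ⟨_, ⟨by simpa [visualDist_self] using hε, isOpen_visualBall hχ x₀ ξ ε⟩,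
      subset_rfl⟩)

end VisualTopology

def tent (y w : X) : ℝ := max 0 (1 - dist y w)

lemma tent_self (y : X) : tent y y = 1 := by simp [tent]

lemma tent_nonneg (y w : X) : 0 ≤ tent y w := le_max_left _ _

lemma tent_le_one (y w : X) : tent y w ≤ 1 :=
  max_le zero_le_one (sub_le_self _ dist_nonneg)

lemma tent_eq_zero (y : X) {w : X} (h : 1 ≤ dist y w) : tent y w = 0 :=
  max_eq_left (by linarith)

lemma abs_tent_sub_tent_le (y y' w : X) : |tent y w - tent y' w| ≤ dist y y' := by
  refine (abs_max_sub_max_le_max _ _ _ _).trans (max_le (by simp) ?_)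
  rw [sub_sub_sub_cancel_left, abs_sub_comm]
  exact abs_dist_sub_le y y' w

lemma tent_apply_apply (g : Iso X) (y w : X) : tent (g y) (g w) = tent y w := by
  rw [tent, tent, g.dist_eq]

lemma tent_mul_visualDist_le {χ : ℝ} (hχ : 0 ≤ χ) (y w : X) (ξ η : GromovBoundary X) :
    tent y w * visualDist χ w ξ η ≤ Real.exp χ * visualDist χ y ξ η := by
  rcases le_or_gt 1 (dist y w) with h | h
  · rw [tent_eq_zero y h, zero_mul]
    exact mul_nonneg (Real.exp_pos _).le (visualDist_nonneg _ _ _ _)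
  calc tent y w * visualDist χ w ξ η ≤ 1 * (Real.exp (χ * dist w y) * visualDist χ y ξ η) :=
        mul_le_mul (tent_le_one y w) (visualDist_le_exp_mul hχ w y ξ η)
          (visualDist_nonneg _ _ _ _) zero_le_one
    _ ≤ Real.exp χ * visualDist χ y ξ η := by
        rw [one_mul, dist_comm]
        exact mul_le_mul_of_nonneg_right (Real.exp_le_exp.2 (mul_le_of_le_one_right hχ h.le))
          (visualDist_nonneg _ _ _ _)

def testFunction (χ : ℝ) (p : GromovBoundary X × X) : X ⊕ (X × GromovBoundary X) → ℝ
  | .inl w => tent p.2 w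
  | .inr (w, ζ) => tent p.2 w * visualDist χ w p.1 ζ

lemma abs_testFunction_le_one {χ : ℝ} (hχ : 0 ≤ χ) (p : GromovBoundary X × X)
    (i : X ⊕ (X × GromovBoundary X)) : |testFunction χ p i| ≤ 1 := by
  rcases i with w | ⟨w, ζ⟩
  · exact abs_le.2 ⟨(neg_nonpos.2 zero_le_one).trans (tent_nonneg p.2 w), tent_le_one p.2 w⟩
  · rw [testFunction, abs_of_nonneg (mul_nonneg (tent_nonneg _ _) (visualDist_nonneg _ _ _ _))]
    exact mul_le_one₀ (tent_le_one _ _) (visualDist_nonneg _ _ _ _) (visualDist_le_one hχ _ _ _)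

def testEmbedding (χ : ℝ≥0) (p : GromovBoundary X × X) :
    lp (fun _ : X ⊕ (X × GromovBoundary X) => ℝ) ∞ :=
  ⟨testFunction χ p, memℓp_infty_iff.2 ⟨1, by
    rintro _ ⟨i, rfl⟩
    exact abs_testFunction_le_one χ.2 p i⟩⟩

section TestEmbedding

variable {χ : ℝ≥0} {δ : ℝ}

lemma abs_testFunction_sub_le_dist (p q : GromovBoundary X × X) (i : X ⊕ (X × GromovBoundary X)) :
    |testFunction χ p i - testFunction χ q i| ≤ dist (testEmbedding χ p) (testEmbedding χ q) := by
  have := lp.norm_apply_le_norm (E := fun _ : X ⊕ (X × GromovBoundary X) => ℝ)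
    ENNReal.top_ne_zero (testEmbedding χ p - testEmbedding χ q) i
  rw [lp.coeFn_sub, Pi.sub_apply, Real.norm_eq_abs] at this
  rw [dist_eq_norm]
  exact this

lemma dist_testEmbedding_le_of_forall {p q : GromovBoundary X × X} {C : ℝ} (hC : 0 ≤ C)
    (h : ∀ i, |testFunction χ p i - testFunction χ q i| ≤ C) :
    dist (testEmbedding χ p) (testEmbedding χ q) ≤ C := by
  rw [dist_eq_norm]
  refine lp.norm_le_of_forall_le hC fun i => ?_
  rw [lp.coeFn_sub, Pi.sub_apply, Real.norm_eq_abs]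
  exact h i

lemma min_one_dist_le_dist_testEmbedding (p q : GromovBoundary X × X) :
    min 1 (dist p.2 q.2) ≤ dist (testEmbedding χ p) (testEmbedding χ q) := by
  have h := abs_testFunction_sub_le_dist (χ := χ) p q (.inl p.2)
  have hq : testFunction χ q (.inl p.2) = max 0 (1 - dist p.2 q.2) := by
    rw [testFunction, tent, dist_comm]
  rw [testFunction, tent_self, hq] at h
  refine le_of_eq_of_le ?_ h
  rw [abs_of_nonneg (sub_nonneg.2 (max_le zero_le_one (sub_le_self _ dist_nonneg))),
    ← min_sub_sub_left, sub_zero, sub_sub_cancel]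

lemma visualDist_le_dist_testEmbedding (p q : GromovBoundary X × X) :
    visualDist χ p.2 p.1 q.1 ≤ dist (testEmbedding χ p) (testEmbedding χ q) := by
  have h := abs_testFunction_sub_le_dist (χ := χ) p q (.inr (p.2, q.1))
  simp only [testFunction, tent_self, one_mul, visualDist_self, mul_zero, sub_zero] at h
  exact (le_abs_self _).trans h

lemma dist_testEmbedding_le (p q : GromovBoundary X × X) :
    dist (testEmbedding χ p) (testEmbedding χ q) ≤
      Real.exp χ * visualDist χ p.2 p.1 q.1 + dist p.2 q.2 := by
  have hv := mul_nonneg (Real.exp_pos χ).le (visualDist_nonneg χ p.2 p.1 q.1)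
  refine dist_testEmbedding_le_of_forall (add_nonneg hv dist_nonneg) ?_
  rintro (w | ⟨w, ζ⟩)
  · exact (abs_tent_sub_tent_le _ _ _).trans (le_add_of_nonneg_left hv)
  · have hsplit : testFunction χ p (.inr (w, ζ)) - testFunction χ q (.inr (w, ζ)) =
        tent p.2 w * (visualDist χ w p.1 ζ - visualDist χ w q.1 ζ) +
          (tent p.2 w - tent q.2 w) * visualDist χ w q.1 ζ := by
      simp only [testFunction]
      ring
    rw [hsplit]
    refine (abs_add_le _ _).trans (add_le_add ?_ ?_)
    · rw [abs_mul, abs_of_nonneg (tent_nonneg _ _)]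
      exact (mul_le_mul_of_nonneg_left (abs_visualDist_sub_le _ _ _ _ _) (tent_nonneg _ _)).trans
        (tent_mul_visualDist_le χ.2 _ _ _ _)
    · rw [abs_mul, abs_of_nonneg (visualDist_nonneg _ _ _ _)]
      exact (mul_le_mul (abs_tent_sub_tent_le _ _ _) (visualDist_le_one χ.2 _ _ _)
        (visualDist_nonneg _ _ _ _) dist_nonneg).trans_eq (mul_one _)

lemma testFunction_boundaryMap (g : Iso X) (p : GromovBoundary X × X)
    (i : X ⊕ (X × GromovBoundary X)) :
    testFunction χ (boundaryMap g p.1, g p.2) (Sum.map g (Prod.map g (boundaryMap g)) i) =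
      testFunction χ p i := by
  rcases i with w | ⟨w, ζ⟩ <;>
    simp only [testFunction, Sum.map_inl, Sum.map_inr, Prod.map, tent_apply_apply,
      visualDist_boundaryMap]

lemma dist_testEmbedding_boundaryMap (g : Iso X) (p q : GromovBoundary X × X) :
    dist (testEmbedding χ (boundaryMap g p.1, g p.2)) (testEmbedding χ (boundaryMap g q.1, g q.2)) =
      dist (testEmbedding χ p) (testEmbedding χ q) := by
  have he : Function.Surjective (Sum.map g (Prod.map g (boundaryMap g))) :=
    g.surjective.sumMap (g.surjective.prodMap (boundaryMap_surjective g))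
  refine le_antisymm (dist_testEmbedding_le_of_forall dist_nonneg fun j => ?_)
    (dist_testEmbedding_le_of_forall dist_nonneg fun i => ?_)
  · obtain ⟨i, rfl⟩ := he j
    rw [testFunction_boundaryMap, testFunction_boundaryMap]
    exact abs_testFunction_sub_le_dist p q i
  · rw [← testFunction_boundaryMap g p i, ← testFunction_boundaryMap g q i]
    exact abs_testFunction_sub_le_dist _ _ _

lemma testEmbedding_injective (hX : GromovFourPoint X δ) (hδ : 0 ≤ δ)
    (hχδ : 6 * χ * δ ≤ Real.log 2) : Function.Injective (testEmbedding (X := X) χ) := by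
  intro p q h
  have h0 : dist (testEmbedding χ p) (testEmbedding χ q) = 0 := by rw [h, dist_self]
  have hy := min_one_dist_le_dist_testEmbedding (χ := χ) p q
  rw [h0, min_le_iff, or_iff_right (by norm_num), dist_le_zero] at hy
  have hξ := (visualDist_le_dist_testEmbedding (χ := χ) p q).trans h0.le
  exact Prod.ext (eq_of_visualDist_eq_zero hX hδ χ.2 hχδ
    (hξ.antisymm (visualDist_nonneg _ _ _ _))) hy

lemma isInducing_testEmbedding (hX : GromovFourPoint X δ) (hδ : 0 ≤ δ) (hχ : 0 < χ)
    (hχδ : 6 * χ * δ ≤ Real.log 2) : IsInducing (testEmbedding (X := X) χ) := by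
  refine isInducing_iff_nhds.2 fun p => ?_
  refine ((nhds_basis_visualBall hX hδ hχ hχδ p.2 p.1).prod_nhds Metric.nhds_basis_ball).ext
    (Metric.nhds_basis_ball.comap _) (fun ε hε => ?_) (fun ε hε => ?_)
  · refine ⟨min 1 (min ε.1 ε.2), by simp [hε.1, hε.2], fun q hq => ?_⟩
    have hq : dist (testEmbedding χ p) (testEmbedding χ q) < min 1 (min ε.1 ε.2) := by
      rw [dist_comm]
      exact hq
    have hy := (min_one_dist_le_dist_testEmbedding p q).trans_lt hq
    have hy' : dist p.2 q.2 < min ε.1 ε.2 :=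
      lt_of_not_ge fun h => (min_le_min_left 1 h).not_gt hy
    refine ⟨?_, ?_⟩
    · exact ((visualDist_le_dist_testEmbedding p q).trans_lt hq).trans_le
        ((min_le_right _ _).trans (min_le_left _ _))
    · rw [mem_ball, dist_comm]
      exact hy'.trans_le (min_le_right _ _)
  · refine ⟨(ε / (2 * Real.exp χ), ε / 2), ⟨by positivity, by positivity⟩, ?_⟩
    rintro q ⟨hξ, hy⟩
    change visualDist χ p.2 p.1 q.1 < ε / (2 * Real.exp χ) at hξ
    rw [mem_ball, dist_comm] at hy
    rw [Set.mem_preimage, mem_ball, dist_comm]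
    calc dist (testEmbedding χ p) (testEmbedding χ q)
        ≤ Real.exp χ * visualDist χ p.2 p.1 q.1 + dist p.2 q.2 := dist_testEmbedding_le p q
      _ < Real.exp χ * (ε / (2 * Real.exp χ)) + ε / 2 := by gcongr
      _ = ε := by field_simp; ring

end TestEmbedding

lemma isMetricDist_dist_comp {α β : Type*} [MetricSpace β] {Φ : α → β}
    (hΦ : Function.Injective Φ) : IsMetricDist fun a b => dist (Φ a) (Φ b) :=
  ⟨fun _ => dist_self _, fun _ _ h => dist_pos.2 (hΦ.ne h), fun _ _ => dist_comm _ _,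
    fun _ _ _ => dist_triangle _ _ _⟩

lemma distTopology_dist_comp {α β : Type*} [t : TopologicalSpace α] [PseudoMetricSpace β]
    {Φ : α → β} (hΦ : IsInducing Φ) : distTopology (fun a b => dist (Φ a) (Φ b)) = t := by
  refine le_antisymm (fun U hU => ?_) (le_generateFrom ?_)
  · obtain ⟨V, hV, rfl⟩ := hΦ.isOpen_iff.1 hU
    choose r _ hrV using fun a : Φ ⁻¹' V => Metric.isOpen_iff.1 hV _ a.2
    have hU : Φ ⁻¹' V = ⋃ a : Φ ⁻¹' V, {b | dist (Φ a) (Φ b) < r a} := by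
      refine Set.Subset.antisymm (fun a ha => Set.mem_iUnion.2 ⟨⟨a, ha⟩, ?_⟩) ?_
      · simpa using ‹∀ a, 0 < r a› ⟨a, ha⟩
      · refine Set.iUnion_subset fun a b hb => hrV a ?_
        rw [mem_ball, dist_comm]
        exact hb
    rw [hU]
    exact @isOpen_iUnion _ _ (distTopology _) _ fun a =>
      TopologicalSpace.GenerateOpen.basic _ ⟨a, r a, rfl⟩
  · rintro _ ⟨c, r, rfl⟩
    exact isOpen_lt (continuous_const.dist hΦ.continuous) continuous_const

theorem boundary_times_space_invariant_metric_general
    {X : Type} [MetricSpace X]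
    (hgeo : GeodesicSpace X) (hhyp : GromovHyperbolic X) :
    ∃ ρ : GromovBoundary X × X → GromovBoundary X × X → ℝ,
      IsMetricDist ρ ∧
      (∀ (g : Iso X) (pq : (GromovBoundary X × X) × (GromovBoundary X × X)),
        ρ (boundaryMap g pq.1.1, g pq.1.2) (boundaryMap g pq.2.1, g pq.2.2) = ρ pq.1 pq.2) ∧
      distTopology ρ = (inferInstance : TopologicalSpace (GromovBoundary X × X)) := by
  obtain ⟨δ, hδ, hthin⟩ := hhyp
  have hX := gromovFourPoint_of_thin hgeo hthin
  have h3δ : 0 ≤ 3 * δ := by positivity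
  have hχ₀ : 0 < Real.log 2 / (18 * δ) := div_pos (Real.log_pos one_lt_two) (by positivity)
  obtain ⟨χ, hχ, hχδ⟩ : ∃ χ : ℝ≥0, 0 < χ ∧ 6 * χ * (3 * δ) ≤ Real.log 2 :=
    ⟨Real.toNNReal (Real.log 2 / (18 * δ)), Real.toNNReal_pos.2 hχ₀, by
      rw [Real.coe_toNNReal _ hχ₀.le]; field_simp; norm_num⟩
  exact ⟨fun p q => dist (testEmbedding χ p) (testEmbedding χ q),
    isMetricDist_dist_comp (testEmbedding_injective hX h3δ hχδ),
    fun g pq => dist_testEmbedding_boundaryMap g pq.1 pq.2,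
    distTopology_dist_comp (isInducing_testEmbedding hX h3δ hχ hχδ)⟩

/-- **Theorem (Statement 3).** For a proper hyperbolic geodesic metric space `X`, the
product `∂X × X` admits an `Iso X`-invariant distance function inducing the product
topology. -/
theorem boundary_times_space_invariant_metric
    {X : Type} [MetricSpace X] [ProperSpace X]
    (hgeo : GeodesicSpace X) (hhyp : GromovHyperbolic X) :
    ∃ ρ : GromovBoundary X × X → GromovBoundary X × X → ℝ,
      IsMetricDist ρ ∧
      (∀ (g : Iso X) (pq : (GromovBoundary X × X) × (GromovBoundary X × X)),
        ρ (boundaryMap g pq.1.1, g pq.1.2) (boundaryMap g pq.2.1, g pq.2.2) = ρ pq.1 pq.2) ∧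
      distTopology ρ = (inferInstance : TopologicalSpace (GromovBoundary X × X)) :=
  boundary_times_space_invariant_metric_general hgeo hhyp

end PaperHyp
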